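/- Let f : ℝ → ℝ be a convex function, let A_1, …, A_m be n×n Hermitian complex matrices, and let Z_1, …, Z_m be n×n complex matrices with ∑_{i=1}^m Z_iᴴ Z_i = I. Then for every j ≥ 1 with 2j−1 ≤ n, λ_{2j-1}(f(∑_i Z_iᴴ A_i Z_i)) ≤ λ_j(∑_i Z_iᴴ f(A_i) Z_i), where λ_j(·) denotes the j-th largest eigenvalue counted with multiplicity. -/

import Mathlib

/-!
Write `C = ∑ Zᵢᴴ Aᵢ Zᵢ`, `D = ∑ Zᵢᴴ f(Aᵢ) Zᵢ`, `μ = λ_j(D)`, and let `S` be the span of the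
eigenvectors of `D` for its `n - j + 1` smallest eigenvalues. For a unit vector `x`, expanding
each `Zᵢ x` in an eigenbasis of `Aᵢ` exhibits `⟪x, C x⟫` as a convex combination of eigenvalues of
the `Aᵢ` and `⟪x, D x⟫` as the same combination of their images under `f`, so Jensen gives
`f ⟪x, C x⟫ ≤ ⟪x, D x⟫ ≤ μ` on `S`: the numerical range of `C` on `S` lies in the interval
`K = {f ≤ μ}`. Eigenvectors of `C` whose eigenvalues all lie on one side of `K` span a space
meeting `S` trivially, so at most `j - 1` eigenvalues of `C` lie above `K` and at most `j - 1`
below it. The other `n - 2j + 2` eigenvalues satisfy `f(λ) ≤ μ`, and min-max turns this into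
`λ_{2j-1}(f(C)) ≤ μ`.
-/

open Matrix

/-- The `j`-th largest eigenvalue of a Hermitian matrix (`0`-indexed, so `eigDesc hA ⟨0, _⟩`
is the largest), counted with multiplicity. -/
noncomputable def eigDesc {n : ℕ} {A : Matrix (Fin n) (Fin n) ℂ} (hA : A.IsHermitian)
    (j : Fin n) : ℝ :=
  hA.eigenvalues (Tuple.sort hA.eigenvalues j.rev)

/-- Applying a real function to a Hermitian matrix via the functional calculus yields a
Hermitian matrix. -/
lemma isHermitian_cfc {n : ℕ} {A : Matrix (Fin n) (Fin n) ℂ} (hA : A.IsHermitian)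
    (f : ℝ → ℝ) : (hA.cfc f).IsHermitian := by
  rw [← hA.cfc_eq]
  exact cfc_predicate f A

lemma isHermitian_half_smul {n : ℕ} {X : Matrix (Fin n) (Fin n) ℂ} (hX : X.IsHermitian) :
    ((2 : ℝ)⁻¹ • X).IsHermitian := by
  show _ = _
  rw [Matrix.conjTranspose_smul, star_trivial, hX.eq]

lemma isHermitian_sum_conj {m n : ℕ} {A : Fin m → Matrix (Fin n) (Fin n) ℂ}
    (Z : Fin m → Matrix (Fin n) (Fin n) ℂ) (hA : ∀ i, (A i).IsHermitian) :
    (∑ i, (Z i)ᴴ * A i * Z i).IsHermitian := by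
  show _ = _
  rw [Matrix.conjTranspose_sum]
  exact Finset.sum_congr rfl fun i _ => (isHermitian_conjTranspose_mul_mul (Z i) (hA i)).eq

open Module Finset
open scoped InnerProductSpace

theorem OrthonormalBasis.re_inner_map_self_eq_sum {ι 𝕜 E : Type*} [RCLike 𝕜]
    [NormedAddCommGroup E] [InnerProductSpace 𝕜 E] [Fintype ι] (b : OrthonormalBasis ι 𝕜 E)
    {T : E →ₗ[𝕜] E} {c : ι → ℝ} (hT : ∀ i, T (b i) = (c i : 𝕜) • b i) (y : E) :
    RCLike.re ⟪y, T y⟫_𝕜 = ∑ i, ‖⟪b i, y⟫_𝕜‖ ^ 2 * c i := by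
  have hTy : T y = ∑ i, (c i * ⟪b i, y⟫_𝕜) • b i := by
    conv_lhs => rw [← b.sum_repr' y]
    simp only [map_sum, map_smul, hT, smul_smul, mul_comm]
  rw [hTy, inner_sum, map_sum]
  refine sum_congr rfl fun i _ => ?_
  rw [inner_smul_right, ← inner_conj_symm (b i) y, mul_assoc, RCLike.conj_mul, RCLike.norm_conj,
    ← RCLike.ofReal_pow, ← RCLike.ofReal_mul, RCLike.ofReal_re, mul_comm]

theorem Submodule.exists_mem_mem_norm_eq_one_of_finrank_lt {𝕜 E : Type*} [RCLike 𝕜]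
    [NormedAddCommGroup E] [InnerProductSpace 𝕜 E] [FiniteDimensional 𝕜 E]
    {S T : Submodule 𝕜 E} (h : finrank 𝕜 E < finrank 𝕜 S + finrank 𝕜 T) :
    ∃ x ∈ S, x ∈ T ∧ ‖x‖ = 1 := by
  have hST : ¬Disjoint S T := fun hST => h.not_ge (finrank_add_finrank_le_of_disjoint hST)
  obtain ⟨x, hxS, hxT, hx⟩ : ∃ x ∈ S, x ∈ T ∧ x ≠ 0 := by
    simpa [Submodule.disjoint_def] using hST
  exact ⟨(‖x‖⁻¹ : 𝕜) • x, S.smul_mem _ hxS, T.smul_mem _ hxT, norm_smul_inv_norm hx⟩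

namespace Matrix.IsHermitian

variable {𝕜 ι : Type*} [RCLike 𝕜] [Fintype ι] [DecidableEq ι] {X : Matrix ι ι 𝕜}

theorem cfc_id (hX : X.IsHermitian) : hX.cfc (fun t => t) = X :=
  (hX.cfc_eq _).symm.trans (cfc_id' ℝ X)

theorem cfc_one (hX : X.IsHermitian) : hX.cfc (fun _ => 1) = 1 :=
  (hX.cfc_eq _).symm.trans (cfc_const_one ℝ X)

theorem toEuclideanLin_cfc_eigenvectorBasis (hX : X.IsHermitian) (g : ℝ → ℝ) (i : ι) :
    toEuclideanLin (hX.cfc g) (hX.eigenvectorBasis i) =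
      (g (hX.eigenvalues i) : 𝕜) • hX.eigenvectorBasis i := by
  rw [Matrix.IsHermitian.cfc, Unitary.conjStarAlgAut_apply]
  ext k
  simp [toLpLin_apply, hX.star_eigenvectorUnitary_mulVec]

theorem re_inner_cfc_eq_sum (hX : X.IsHermitian) (g : ℝ → ℝ) (y : EuclideanSpace 𝕜 ι) :
    RCLike.re ⟪y, toEuclideanLin (hX.cfc g) y⟫_𝕜 =
      ∑ i, ‖⟪hX.eigenvectorBasis i, y⟫_𝕜‖ ^ 2 * g (hX.eigenvalues i) :=
  hX.eigenvectorBasis.re_inner_map_self_eq_sum (hX.toEuclideanLin_cfc_eigenvectorBasis g) y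

noncomputable def eigenspan (hX : X.IsHermitian) (I : Finset ι) :
    Submodule 𝕜 (EuclideanSpace 𝕜 ι) :=
  Submodule.span 𝕜 (Set.range fun i : I => hX.eigenvectorBasis i)

theorem finrank_eigenspan (hX : X.IsHermitian) (I : Finset ι) :
    finrank 𝕜 (hX.eigenspan I) = #I :=
  (finrank_span_eq_card (hX.eigenvectorBasis.orthonormal.linearIndependent.comp _
    Subtype.val_injective)).trans (Fintype.card_coe I)

theorem inner_eigenvectorBasis_eq_zero_of_mem_eigenspan (hX : X.IsHermitian) {I : Finset ι}
    {x : EuclideanSpace 𝕜 ι} (hx : x ∈ hX.eigenspan I) {i : ι} (hi : i ∉ I) :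
    ⟪hX.eigenvectorBasis i, x⟫_𝕜 = 0 := by
  induction hx using Submodule.span_induction with
  | mem _ hy =>
    obtain ⟨⟨k, hk⟩, rfl⟩ := hy
    exact hX.eigenvectorBasis.orthonormal.inner_eq_zero (by rintro rfl; exact hi hk)
  | zero => exact inner_zero_right _
  | add _ _ _ _ hy hz => rw [inner_add_right, hy, hz, add_zero]
  | smul _ _ _ hy => rw [inner_smul_right, hy, mul_zero]

theorem re_inner_cfc_le_of_mem_eigenspan (hX : X.IsHermitian) {g : ℝ → ℝ} {I : Finset ι}
    {μ : ℝ} (hg : ∀ i ∈ I, g (hX.eigenvalues i) ≤ μ) {x : EuclideanSpace 𝕜 ι}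
    (hx : x ∈ hX.eigenspan I) (hx1 : ‖x‖ = 1) :
    RCLike.re ⟪x, toEuclideanLin (hX.cfc g) x⟫_𝕜 ≤ μ := by
  rw [re_inner_cfc_eq_sum]
  calc ∑ i, ‖⟪hX.eigenvectorBasis i, x⟫_𝕜‖ ^ 2 * g (hX.eigenvalues i)
      ≤ ∑ i, ‖⟪hX.eigenvectorBasis i, x⟫_𝕜‖ ^ 2 * μ := by
        refine sum_le_sum fun i _ => ?_
        by_cases hi : i ∈ I
        · exact mul_le_mul_of_nonneg_left (hg i hi) (sq_nonneg _)
        · simp [hX.inner_eigenvectorBasis_eq_zero_of_mem_eigenspan hx hi]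
    _ = μ := by rw [← sum_mul, hX.eigenvectorBasis.sum_sq_norm_inner_right, hx1, one_pow, one_mul]

theorem le_re_inner_cfc_of_mem_eigenspan (hX : X.IsHermitian) {g : ℝ → ℝ} {I : Finset ι}
    {μ : ℝ} (hg : ∀ i ∈ I, μ ≤ g (hX.eigenvalues i)) {x : EuclideanSpace 𝕜 ι}
    (hx : x ∈ hX.eigenspan I) (hx1 : ‖x‖ = 1) :
    μ ≤ RCLike.re ⟪x, toEuclideanLin (hX.cfc g) x⟫_𝕜 := by
  rw [re_inner_cfc_eq_sum]
  calc μ = ∑ i, ‖⟪hX.eigenvectorBasis i, x⟫_𝕜‖ ^ 2 * μ := by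
        rw [← sum_mul, hX.eigenvectorBasis.sum_sq_norm_inner_right, hx1, one_pow, one_mul]
    _ ≤ ∑ i, ‖⟪hX.eigenvectorBasis i, x⟫_𝕜‖ ^ 2 * g (hX.eigenvalues i) := by
        refine sum_le_sum fun i _ => ?_
        by_cases hi : i ∈ I
        · exact mul_le_mul_of_nonneg_left (hg i hi) (sq_nonneg _)
        · simp [hX.inner_eigenvectorBasis_eq_zero_of_mem_eigenspan hx hi]

theorem re_inner_le_of_mem_eigenspan (hX : X.IsHermitian) {I : Finset ι} {μ : ℝ}
    (hI : ∀ i ∈ I, hX.eigenvalues i ≤ μ) {x : EuclideanSpace 𝕜 ι} (hx : x ∈ hX.eigenspan I)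
    (hx1 : ‖x‖ = 1) : RCLike.re ⟪x, toEuclideanLin X x⟫_𝕜 ≤ μ := by
  simpa only [hX.cfc_id] using hX.re_inner_cfc_le_of_mem_eigenspan (g := fun t => t) hI hx hx1

theorem le_re_inner_of_mem_eigenspan (hX : X.IsHermitian) {I : Finset ι} {μ : ℝ}
    (hI : ∀ i ∈ I, μ ≤ hX.eigenvalues i) {x : EuclideanSpace 𝕜 ι} (hx : x ∈ hX.eigenspan I)
    (hx1 : ‖x‖ = 1) : μ ≤ RCLike.re ⟪x, toEuclideanLin X x⟫_𝕜 := by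
  simpa only [hX.cfc_id] using hX.le_re_inner_cfc_of_mem_eigenspan (g := fun t => t) hI hx hx1

theorem card_add_finrank_le_of_forall_notMem_Icc (hX : X.IsHermitian)
    {S : Submodule 𝕜 (EuclideanSpace 𝕜 ι)} {I : Finset ι}
    (h : ∀ x ∈ S, ‖x‖ = 1 → ∀ i ∈ I, ∀ i' ∈ I,
      RCLike.re ⟪x, toEuclideanLin X x⟫_𝕜 ∉ Set.Icc (hX.eigenvalues i) (hX.eigenvalues i')) :
    #I + finrank 𝕜 S ≤ Fintype.card ι := by
  by_contra! hlt
  have hS := S.finrank_le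
  rw [finrank_euclideanSpace] at hS
  obtain ⟨x, hxS, hxI, hx1⟩ := Submodule.exists_mem_mem_norm_eq_one_of_finrank_lt
    (S := S) (T := hX.eigenspan I) (by rw [finrank_euclideanSpace, finrank_eigenspan]; omega)
  have hI : I.Nonempty := card_pos.mp (by omega)
  obtain ⟨i, hi, hmin⟩ := I.exists_min_image hX.eigenvalues hI
  obtain ⟨i', hi', hmax⟩ := I.exists_max_image hX.eigenvalues hI
  exact h x hxS hx1 i hi i' hi' ⟨hX.le_re_inner_of_mem_eigenspan hmin hxI hx1,
    hX.re_inner_le_of_mem_eigenspan hmax hxI hx1⟩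

theorem card_filter_eigenvalues_notMem_le (hX : X.IsHermitian)
    {S : Submodule 𝕜 (EuclideanSpace 𝕜 ι)} {K : Set ℝ} [DecidablePred (· ∈ K)]
    (hK : K.OrdConnected) (hSK : ∀ x ∈ S, ‖x‖ = 1 → RCLike.re ⟪x, toEuclideanLin X x⟫_𝕜 ∈ K)
    (hS : 0 < finrank 𝕜 S) :
    #{i | hX.eigenvalues i ∉ K} ≤ 2 * (Fintype.card ι - finrank 𝕜 S) := by
  obtain ⟨x₀, hx₀S, -, hx₀⟩ := Submodule.exists_mem_mem_norm_eq_one_of_finrank_lt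
    (S := S) (T := ⊤) (by rw [finrank_top]; omega)
  set c := RCLike.re ⟪x₀, toEuclideanLin X x₀⟫_𝕜
  have hc : c ∈ K := hSK x₀ hx₀S hx₀
  let high : Finset ι := {i | hX.eigenvalues i ∉ K ∧ c < hX.eigenvalues i}
  let low : Finset ι := {i | hX.eigenvalues i ∉ K ∧ hX.eigenvalues i < c}
  have hhigh : #high + finrank 𝕜 S ≤ Fintype.card ι := by
    refine hX.card_add_finrank_le_of_forall_notMem_Icc fun x hxS hx1 i hi i' _ hr => ?_
    simp only [high, mem_filter_univ] at hi
    exact hi.1 (hK.out hc (hSK x hxS hx1) ⟨hi.2.le, hr.1⟩)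
  have hlow : #low + finrank 𝕜 S ≤ Fintype.card ι := by
    refine hX.card_add_finrank_le_of_forall_notMem_Icc fun x hxS hx1 i _ i' hi' hr => ?_
    simp only [low, mem_filter_univ] at hi'
    exact hi'.1 (hK.out (hSK x hxS hx1) hc ⟨hr.2, hi'.2.le⟩)
  have hsplit : ({i | hX.eigenvalues i ∉ K} : Finset ι) ⊆ high ∪ low := by
    intro i hi
    simp only [high, low, mem_filter_univ, mem_union] at hi ⊢
    rcases lt_trichotomy c (hX.eigenvalues i) with h | h | h
    · exact .inl ⟨hi, h⟩
    · exact absurd (h ▸ hc) hi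
    · exact .inr ⟨hi, h⟩
  have := (card_le_card hsplit).trans (card_union_le _ _)
  omega

end Matrix.IsHermitian

section Jensen

variable {𝕜 ι κ : Type*} [RCLike 𝕜] [Fintype ι] [DecidableEq ι] [Fintype κ]

theorem Matrix.re_inner_sum_conjTranspose_mul_cfc_mul_eq_sum {A : κ → Matrix ι ι 𝕜}
    (hA : ∀ k, (A k).IsHermitian) (Z : κ → Matrix ι ι 𝕜) (g : ℝ → ℝ) (x : EuclideanSpace 𝕜 ι) :
    RCLike.re ⟪x, toEuclideanLin (∑ k, (Z k)ᴴ * (hA k).cfc g * Z k) x⟫_𝕜 =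
      ∑ p : κ × ι, ‖⟪(hA p.1).eigenvectorBasis p.2, toEuclideanLin (Z p.1) x⟫_𝕜‖ ^ 2 *
        g ((hA p.1).eigenvalues p.2) := by
  simp only [map_sum, LinearMap.sum_apply, inner_sum, toLpLin_mul_same, LinearMap.comp_apply,
    toEuclideanLin_conjTranspose_eq_adjoint, LinearMap.adjoint_inner_right,
    (hA _).re_inner_cfc_eq_sum, Fintype.sum_prod_type]

theorem ConvexOn.map_re_inner_sum_conjTranspose_mul_mul_le {f : ℝ → ℝ}
    (hf : ConvexOn ℝ Set.univ f) {A : κ → Matrix ι ι 𝕜} (hA : ∀ k, (A k).IsHermitian)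
    {Z : κ → Matrix ι ι 𝕜} (hZ : ∑ k, (Z k)ᴴ * Z k = 1) {x : EuclideanSpace 𝕜 ι}
    (hx : ‖x‖ = 1) :
    f (RCLike.re ⟪x, toEuclideanLin (∑ k, (Z k)ᴴ * A k * Z k) x⟫_𝕜) ≤
      RCLike.re ⟪x, toEuclideanLin (∑ k, (Z k)ᴴ * (hA k).cfc f * Z k) x⟫_𝕜 := by
  have hw : ∑ p : κ × ι, ‖⟪(hA p.1).eigenvectorBasis p.2, toEuclideanLin (Z p.1) x⟫_𝕜‖ ^ 2 = 1 := by
    simpa [(hA _).cfc_one, hZ, hx] using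
      (re_inner_sum_conjTranspose_mul_cfc_mul_eq_sum hA Z (fun _ => 1) x).symm
  have hC : ∑ k, (Z k)ᴴ * A k * Z k = ∑ k, (Z k)ᴴ * (hA k).cfc (fun t => t) * Z k := by
    simp only [(hA _).cfc_id]
  simp only [hC, re_inner_sum_conjTranspose_mul_cfc_mul_eq_sum]
  exact hf.map_sum_le (fun _ _ => sq_nonneg _) hw (fun _ _ => Set.mem_univ _)

end Jensen

section eigDesc

variable {n : ℕ} {X : Matrix (Fin n) (Fin n) ℂ}

theorem exists_card_eq_eigDesc_le_eigenvalues (hX : X.IsHermitian) (k : Fin n) :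
    ∃ I : Finset (Fin n), #I = k + 1 ∧ ∀ i ∈ I, eigDesc hX k ≤ hX.eigenvalues i := by
  refine ⟨(Ici k.rev).map (Tuple.sort hX.eigenvalues).toEmbedding, ?_, ?_⟩
  · rw [card_map, Fin.card_Ici, Fin.val_rev]
    omega
  · intro i hi
    obtain ⟨a, ha, rfl⟩ := mem_map.1 hi
    exact Tuple.monotone_sort hX.eigenvalues (mem_Ici.1 ha)

theorem exists_card_eq_eigenvalues_le_eigDesc (hX : X.IsHermitian) (k : Fin n) :
    ∃ I : Finset (Fin n), #I = n - k ∧ ∀ i ∈ I, hX.eigenvalues i ≤ eigDesc hX k := by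
  refine ⟨(Iic k.rev).map (Tuple.sort hX.eigenvalues).toEmbedding, ?_, ?_⟩
  · rw [card_map, Fin.card_Iic, Fin.val_rev]
    omega
  · intro i hi
    obtain ⟨a, ha, rfl⟩ := mem_map.1 hi
    exact Tuple.monotone_sort hX.eigenvalues (mem_Iic.1 ha)

theorem eigDesc_le_of_forall_re_inner_le (hX : X.IsHermitian) (k : Fin n)
    {S : Submodule ℂ (EuclideanSpace ℂ (Fin n))} (hS : n - k ≤ finrank ℂ S) {μ : ℝ}
    (h : ∀ x ∈ S, ‖x‖ = 1 → RCLike.re ⟪x, toEuclideanLin X x⟫_ℂ ≤ μ) :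
    eigDesc hX k ≤ μ := by
  obtain ⟨I, hI, hIk⟩ := exists_card_eq_eigDesc_le_eigenvalues hX k
  obtain ⟨x, hxS, hxI, hx1⟩ := Submodule.exists_mem_mem_norm_eq_one_of_finrank_lt
    (S := S) (T := hX.eigenspan I)
    (by rw [finrank_euclideanSpace_fin, hX.finrank_eigenspan, hI]; omega)
  exact (hX.le_re_inner_of_mem_eigenspan hIk hxI hx1).trans (h x hxS hx1)

end eigDesc

theorem eig_cfc_isometric_column_le
    {n m : ℕ} (f : ℝ → ℝ) (hf : ConvexOn ℝ Set.univ f)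
    (A : Fin m → Matrix (Fin n) (Fin n) ℂ) (hA : ∀ i, (A i).IsHermitian)
    (Z : Fin m → Matrix (Fin n) (Fin n) ℂ) (hZ : ∑ i, (Z i)ᴴ * Z i = 1)
    (j : ℕ) (hj : 1 ≤ j) (hjn : 2 * j - 1 ≤ n) :
    eigDesc (isHermitian_cfc (isHermitian_sum_conj Z hA) f) ⟨2 * j - 1 - 1, by omega⟩ ≤
      eigDesc (isHermitian_sum_conj Z fun i => isHermitian_cfc (hA i) f)
        ⟨j - 1, by omega⟩ := by
  have hC := isHermitian_sum_conj Z hA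
  have hD := isHermitian_sum_conj Z fun i => isHermitian_cfc (hA i) f
  set μ := eigDesc hD ⟨j - 1, by omega⟩
  obtain ⟨I, hI, hIμ⟩ := exists_card_eq_eigenvalues_le_eigDesc hD ⟨j - 1, by omega⟩
  have hrange : ∀ x ∈ hD.eigenspan I, ‖x‖ = 1 →
      RCLike.re ⟪x, toEuclideanLin (∑ i, (Z i)ᴴ * A i * Z i) x⟫_ℂ ∈ {t | f t ≤ μ} :=
    fun x hx hx1 => (hf.map_re_inner_sum_conjTranspose_mul_mul_le hA hZ hx1).trans
      (hD.re_inner_le_of_mem_eigenspan hIμ hx hx1)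
  have hK : Set.OrdConnected {t | f t ≤ μ} := by
    simpa using (hf.convex_le μ).ordConnected
  have hbad := hC.card_filter_eigenvalues_notMem_le hK hrange
    (by rw [hD.finrank_eigenspan, hI]; omega)
  have hgood := card_filter_add_card_filter_not (s := univ) fun i => f (hC.eigenvalues i) ≤ μ
  rw [hD.finrank_eigenspan, hI] at hbad
  refine eigDesc_le_of_forall_re_inner_le _ _
    (S := hC.eigenspan {i | f (hC.eigenvalues i) ≤ μ}) ?_
    fun x hx hx1 => hC.re_inner_cfc_le_of_mem_eigenspan (fun i => (mem_filter_univ i).1) hx hx1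
  simp only [hC.finrank_eigenspan, Set.mem_ofPred_eq, card_univ, Fintype.card_fin] at hbad hgood ⊢
  omega
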